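/- For every n ≥ 1 and all ω, θ ∈ ℝ^k, the averaged target difference satisfies ‖∑_z μ(z)·φ(z)·((Hⁿ q_ω)(z) − (Hⁿ q_θ)(z))‖₂ ≤ (φ_max² / μ_min) · γⁿ · ‖ω − θ‖₂. -/
import Mathlib


open Finset Matrix

variable {X A : Type*}

noncomputable def bellman [Fintype X] [Fintype A] [Nonempty A]
    (P : X → A → X → ℝ) (r : X × A → ℝ) (γ : ℝ) (q : X × A → ℝ) :
    X × A → ℝ :=
  fun z => r z + γ * ∑ x' : X, P z.1 z.2 x' *
    Finset.univ.sup' Finset.univ_nonempty (fun a' : A => q (x', a'))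

noncomputable def supNorm [Fintype X] [Fintype A] [Nonempty X] [Nonempty A]
    (q : X × A → ℝ) : ℝ :=
  Finset.univ.sup' Finset.univ_nonempty (fun z : X × A => |q z|)

noncomputable def munorm [Fintype X] [Fintype A] (μ q : X × A → ℝ) : ℝ :=
  Real.sqrt (∑ z : X × A, μ z * q z ^ 2)

def qlin {k : ℕ} (φ : X × A → Fin k → ℝ) (ω : Fin k → ℝ) : X × A → ℝ :=
  fun z => φ z ⬝ᵥ ω

noncomputable def cov [Fintype X] [Fintype A] {k : ℕ}
    (μ : X × A → ℝ) (φ : X × A → Fin k → ℝ) : Matrix (Fin k) (Fin k) ℝ :=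
  ∑ z : X × A, μ z • Matrix.vecMulVec (φ z) (φ z)

noncomputable def proj [Fintype X] [Fintype A] {k : ℕ}
    (μ : X × A → ℝ) (φ : X × A → Fin k → ℝ) (q : X × A → ℝ) : X × A → ℝ :=
  fun z => φ z ⬝ᵥ (cov μ φ)⁻¹.mulVec (∑ z' : X × A, (μ z' * q z') • φ z')

noncomputable def enorm2 {k : ℕ} (v : Fin k → ℝ) : ℝ :=
  Real.sqrt (∑ i, v i ^ 2)

noncomputable def phiMax [Fintype X] [Fintype A] [Nonempty X] [Nonempty A]
    {k : ℕ} (φ : X × A → Fin k → ℝ) : ℝ :=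
  Finset.univ.sup' Finset.univ_nonempty (fun z : X × A => enorm2 (φ z))

noncomputable def sigmaMax {k : ℕ} (M : Matrix (Fin k) (Fin k) ℝ) : ℝ :=
  ‖LinearMap.toContinuousLinearMap (Matrix.toEuclideanLin M)‖

noncomputable def gmap [Fintype X] [Fintype A] [Nonempty A] {k : ℕ}
    (P : X → A → X → ℝ) (r : X × A → ℝ) (γ : ℝ)
    (μ : X × A → ℝ) (φ : X × A → Fin k → ℝ) (n : ℕ) (ω : Fin k → ℝ) :
    Fin k → ℝ :=
  ∑ z : X × A, (μ z * ((bellman P r γ)^[n] (qlin φ ω) z - qlin φ ω z)) • φ z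


lemma enorm2_eq_norm {k : ℕ} (v : Fin k → ℝ) :
    enorm2 v = ‖(EuclideanSpace.equiv (Fin k) ℝ).symm v‖ := by
  simp [enorm2, EuclideanSpace.norm_eq, sq_abs]

lemma enorm2_nonneg {k : ℕ} (v : Fin k → ℝ) : 0 ≤ enorm2 v := Real.sqrt_nonneg _

lemma cs_enorm2 {k : ℕ} (u v : Fin k → ℝ) : |u ⬝ᵥ v| ≤ enorm2 u * enorm2 v := by
  rw [enorm2_eq_norm, enorm2_eq_norm]
  have h := abs_real_inner_le_norm ((EuclideanSpace.equiv (Fin k) ℝ).symm u)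
    ((EuclideanSpace.equiv (Fin k) ℝ).symm v)
  simpa [PiLp.inner_apply, dotProduct, RCLike.inner_apply, mul_comm] using h

lemma enorm2_sum_le {ι : Type*} [Fintype ι] {k : ℕ} (c : ι → ℝ) (f : ι → Fin k → ℝ) :
    enorm2 (∑ z : ι, c z • f z) ≤ ∑ z : ι, |c z| * enorm2 (f z) := by
  rw [enorm2_eq_norm]
  have h : (EuclideanSpace.equiv (Fin k) ℝ).symm (∑ z : ι, c z • f z)
      = ∑ z : ι, c z • (EuclideanSpace.equiv (Fin k) ℝ).symm (f z) := by
    simp [map_sum]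
  rw [h]
  refine (norm_sum_le _ _).trans ?_
  refine Finset.sum_le_sum fun z _ => ?_
  rw [norm_smul, enorm2_eq_norm]
  simp [Real.norm_eq_abs]

lemma sup'_diff_le {ι : Type*} (s : Finset ι) (hs : s.Nonempty) (f g : ι → ℝ) (C : ℝ)
    (h : ∀ a ∈ s, |f a - g a| ≤ C) : |s.sup' hs f - s.sup' hs g| ≤ C := by
  rw [abs_le]
  constructor
  · rw [neg_le, neg_sub, sub_le_iff_le_add]
    refine Finset.sup'_le _ _ fun a ha => ?_
    have := (abs_le.1 (h a ha)).1
    have h2 : g a ≤ f a + C := by linarith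
    exact h2.trans (by linarith [Finset.le_sup' f ha])
  · rw [sub_le_iff_le_add]
    refine Finset.sup'_le _ _ fun a ha => ?_
    have := (abs_le.1 (h a ha)).2
    have h2 : f a ≤ g a + C := by linarith
    exact h2.trans (by linarith [Finset.le_sup' g ha])

lemma bellman_step [Fintype X] [Fintype A] [Nonempty A]
    (P : X → A → X → ℝ) (r : X × A → ℝ) (γ : ℝ) (hγ0 : 0 ≤ γ)
    (hP0 : ∀ x a x', 0 ≤ P x a x') (hP1 : ∀ x a, ∑ x' : X, P x a x' = 1)
    (q1 q2 : X × A → ℝ) (C : ℝ) (hC : ∀ z, |q1 z - q2 z| ≤ C) :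
    ∀ z, |bellman P r γ q1 z - bellman P r γ q2 z| ≤ γ * C := by
  intro z
  have key : bellman P r γ q1 z - bellman P r γ q2 z
      = γ * ∑ x' : X, P z.1 z.2 x' *
        (Finset.univ.sup' Finset.univ_nonempty (fun a' : A => q1 (x', a'))
         - Finset.univ.sup' Finset.univ_nonempty (fun a' : A => q2 (x', a'))) := by
    simp only [bellman, mul_sub, Finset.sum_sub_distrib, mul_sub]
    ring
  rw [key, abs_mul, abs_of_nonneg hγ0]
  refine mul_le_mul_of_nonneg_left ?_ hγ0
  calc |∑ x' : X, P z.1 z.2 x' * _| ≤ ∑ x' : X, |P z.1 z.2 x' *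
        (Finset.univ.sup' Finset.univ_nonempty (fun a' : A => q1 (x', a'))
         - Finset.univ.sup' Finset.univ_nonempty (fun a' : A => q2 (x', a')))| :=
      Finset.abs_sum_le_sum_abs _ _
    _ ≤ ∑ x' : X, P z.1 z.2 x' * C := by
        refine Finset.sum_le_sum fun x' _ => ?_
        rw [abs_mul, abs_of_nonneg (hP0 _ _ _)]
        refine mul_le_mul_of_nonneg_left ?_ (hP0 _ _ _)
        exact sup'_diff_le _ _ _ _ _ fun a _ => hC (x', a)
    _ = C := by rw [← Finset.sum_mul, hP1, one_mul]

lemma bellman_iter [Fintype X] [Fintype A] [Nonempty A]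
    (P : X → A → X → ℝ) (r : X × A → ℝ) (γ : ℝ) (hγ0 : 0 ≤ γ)
    (hP0 : ∀ x a x', 0 ≤ P x a x') (hP1 : ∀ x a, ∑ x' : X, P x a x' = 1)
    (q1 q2 : X × A → ℝ) (C : ℝ) (hC : ∀ z, |q1 z - q2 z| ≤ C) (n : ℕ) :
    ∀ z, |(bellman P r γ)^[n] q1 z - (bellman P r γ)^[n] q2 z| ≤ γ ^ n * C := by
  induction n with
  | zero => simpa using hC
  | succ m ih =>
      intro z
      rw [Function.iterate_succ_apply', Function.iterate_succ_apply']
      have := bellman_step P r γ hγ0 hP0 hP1 _ _ (γ ^ m * C) ih z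
      calc _ ≤ γ * (γ ^ m * C) := this
        _ = γ ^ (m + 1) * C := by ring

theorem averaged_target_difference_bound
    [Fintype X] [Fintype A] [Nonempty X] [Nonempty A] {k : ℕ}
    (P : X → A → X → ℝ) (r : X × A → ℝ) (γ : ℝ)
    (hγ0 : 0 ≤ γ) (hγ1 : γ < 1)
    (hP0 : ∀ x a x', 0 ≤ P x a x') (hP1 : ∀ x a, ∑ x' : X, P x a x' = 1)
    (φ : X × A → Fin k → ℝ) (μ : X × A → ℝ) (μmin : ℝ)
    (hμmin : 0 < μmin) (hμ : ∀ z, μmin ≤ μ z) (hμ1 : ∑ z : X × A, μ z = 1)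
    (n : ℕ) (hn : 1 ≤ n) (ω θ : Fin k → ℝ) :
    enorm2 (∑ z : X × A,
        (μ z * ((bellman P r γ)^[n] (qlin φ ω) z - (bellman P r γ)^[n] (qlin φ θ) z)) • φ z) ≤
      (phiMax φ ^ 2 / μmin) * γ ^ n * enorm2 (ω - θ) := by
  set C := phiMax φ * enorm2 (ω - θ) with hCdef
  have z0 : X × A := Classical.arbitrary _
  have hphi0 : 0 ≤ phiMax φ :=
    (enorm2_nonneg (φ z0)).trans (Finset.le_sup' (fun z : X × A => enorm2 (φ z)) (Finset.mem_univ z0))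
  have hen0 : 0 ≤ enorm2 (ω - θ) := enorm2_nonneg _
  have hC0 : 0 ≤ C := mul_nonneg hphi0 hen0
  have hC : ∀ z, |qlin φ ω z - qlin φ θ z| ≤ C := by
    intro z
    have h1 : qlin φ ω z - qlin φ θ z = φ z ⬝ᵥ (ω - θ) := by
      simp [qlin, dotProduct_sub]
    rw [h1]
    refine (cs_enorm2 _ _).trans ?_
    exact mul_le_mul_of_nonneg_right (Finset.le_sup' (fun z : X × A => enorm2 (φ z)) (Finset.mem_univ z)) hen0
  have hiter := bellman_iter P r γ hγ0 hP0 hP1 (qlin φ ω) (qlin φ θ) C hC n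
  have hμ0 : ∀ z, (0:ℝ) ≤ μ z := fun z => hμmin.le.trans (hμ z)
  have hmain : enorm2 (∑ z : X × A,
        (μ z * ((bellman P r γ)^[n] (qlin φ ω) z - (bellman P r γ)^[n] (qlin φ θ) z)) • φ z)
      ≤ γ ^ n * C * phiMax φ := by
    refine (enorm2_sum_le _ _).trans ?_
    have step : ∀ z : X × A,
        |μ z * ((bellman P r γ)^[n] (qlin φ ω) z - (bellman P r γ)^[n] (qlin φ θ) z)|
          * enorm2 (φ z) ≤ μ z * (γ ^ n * C * phiMax φ) := by
      intro z
      rw [abs_mul, abs_of_nonneg (hμ0 z), mul_assoc]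
      refine mul_le_mul_of_nonneg_left ?_ (hμ0 z)
      exact mul_le_mul (hiter z) (Finset.le_sup' (fun z : X × A => enorm2 (φ z)) (Finset.mem_univ z))
        (enorm2_nonneg _) (mul_nonneg (pow_nonneg hγ0 n) hC0)
    refine (Finset.sum_le_sum fun z _ => step z).trans ?_
    rw [← Finset.sum_mul, hμ1, one_mul]
  refine hmain.trans ?_
  have hμmin1 : μmin ≤ 1 := by
    have h1 : μ z0 ≤ ∑ z : X × A, μ z :=
      Finset.single_le_sum (fun z _ => hμ0 z) (Finset.mem_univ z0)
    linarith [hμ z0]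
  have key : phiMax φ ^ 2 ≤ phiMax φ ^ 2 / μmin := by
    rw [le_div_iff₀ hμmin]
    nlinarith [sq_nonneg (phiMax φ)]
  have heq : γ ^ n * C * phiMax φ = phiMax φ ^ 2 * (γ ^ n * enorm2 (ω - θ)) := by
    rw [hCdef]; ring
  rw [heq, show (phiMax φ ^ 2 / μmin) * γ ^ n * enorm2 (ω - θ)
      = (phiMax φ ^ 2 / μmin) * (γ ^ n * enorm2 (ω - θ)) by ring]
  exact mul_le_mul_of_nonneg_right key (mul_nonneg (pow_nonneg hγ0 n) hen0)
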